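/- For every rational value k/q (q ∈ ℕ, q ≥ 2, k ∈ ℤ, gcd(k,q)=1) that is attained by some normalized Dedekind sum S(a,b), there exist infinitely many natural numbers b' such that S(a',b') = k/q for some integer a' coprime to b'. -/

import Mathlib

/-!
For `a` coprime to `m`, `s(a, m) = Q(a, m) / m² - (m - 1) / 4` where
`Q(a, m) = ∑_{k < m} k · (a k mod m)`. Put `c = b² + 1` and write `0 ≤ k < bc` as `k = v + c w`
with `v < c`, `w < b`. Since `b² ≡ -1 (mod c)`, the residue of `(ac + b) k` modulo `bc` has the
digits `bv mod c` and `(a w + a v + ⌊bv / c⌋) mod b`, and summing digit by digit expresses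
`Q(ac + b, bc)` through `Q(a, b)`; the result is `s(ac + b, bc) = s(a, b)`. Iterating
`b ↦ b (b² + 1)` produces infinitely many moduli.
-/

/-- The sawtooth function ((x)). -/
def saw (x : ℚ) : ℚ := if x.den = 1 then 0 else x - ⌊x⌋ - 1/2

/-- The classical Dedekind sum s(a,b). -/
def dedS (a : ℤ) (b : ℕ) : ℚ :=
  ∑ k ∈ Finset.Icc 1 b, saw ((k : ℚ) / b) * saw ((a : ℚ) * k / b)

/-- The normalized Dedekind sum S(a,b) = 12 s(a,b). -/
def S (a : ℤ) (b : ℕ) : ℚ := 12 * dedS a b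

open Finset

lemma saw_intCast_div_of_not_dvd {z : ℤ} {m : ℕ} (hm : m ≠ 0) (h : ¬(m : ℤ) ∣ z) :
    saw (z / m) = ((z % m : ℤ) : ℚ) / m - 1 / 2 := by
  have hden : ((z : ℚ) / m).den ≠ 1 := by
    rw [Ne, Rat.den_eq_one_iff]
    intro hz
    apply h
    refine ⟨((z : ℚ) / m).num, ?_⟩
    have : (z : ℚ) = m * ((z : ℚ) / m).num := by rw [hz]; field_simp
    exact_mod_cast this
  rw [saw, if_neg hden, Rat.floor_intCast_div_natCast, Int.emod_def]
  push_cast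
  field_simp

lemma sum_range_natCast (m : ℕ) : ∑ k ∈ range m, (k : ℚ) = m * (m - 1) / 2 := by
  induction m with
  | zero => simp
  | succ n ih => rw [sum_range_succ, ih]; push_cast; ring

lemma sum_range_zmod {M : Type*} [AddCommMonoid M] {m : ℕ} [NeZero m] (f : ZMod m → M) :
    ∑ k ∈ range m, f k = ∑ x, f x := by
  refine sum_nbij' (fun k => k) ZMod.val (by simp) (fun x _ => mem_range.2 x.val_lt)
    (fun k hk => ?_) (fun x _ => by simp) (fun _ _ => rfl)
  simp [ZMod.val_natCast_of_lt (mem_range.1 hk)]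

lemma sum_range_affine_emod {M : Type*} [AddCommMonoid M] {m : ℕ} [NeZero m] {α : ℤ}
    (hα : IsCoprime α m) (β : ℤ) (g : ℤ → M) :
    ∑ k ∈ range m, g ((α * k + β) % m) = ∑ k ∈ range m, g k := by
  have hunit : IsUnit (α : ZMod m) := (ZMod.coe_int_isUnit_iff_isCoprime α m).2 hα.symm
  let e : ZMod m ≃ ZMod m := (Units.mulLeft hunit.unit).trans (Equiv.addRight (β : ZMod m))
  calc ∑ k ∈ range m, g ((α * k + β) % m)
      = ∑ k ∈ range m, g (e k).val := by
        refine sum_congr rfl fun k _ => ?_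
        simp [e, ← ZMod.val_intCast]
    _ = ∑ x, g (e x).val := sum_range_zmod (fun x => g (e x).val)
    _ = ∑ x : ZMod m, g x.val := e.sum_comp (fun x : ZMod m => g x.val)
    _ = ∑ k ∈ range m, g k := by
        rw [← sum_range_zmod]
        refine sum_congr rfl fun k hk => ?_
        rw [ZMod.val_natCast_of_lt (mem_range.1 hk)]

lemma sum_range_cast_affine_emod {m : ℕ} [NeZero m] {α : ℤ} (hα : IsCoprime α m) (β : ℤ) :
    ∑ k ∈ range m, (((α * k + β) % m : ℤ) : ℚ) = m * (m - 1) / 2 := by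
  rw [sum_range_affine_emod hα β (fun z => (z : ℚ)), ← sum_range_natCast]
  simp

lemma sum_Icc_one_eq_sum_range {M : Type*} [AddCancelCommMonoid M] (f : ℕ → M) {m : ℕ}
    (h : f m = f 0) : ∑ k ∈ Icc 1 m, f k = ∑ k ∈ range m, f k := by
  apply add_left_cancel (a := f 0)
  calc f 0 + ∑ k ∈ Icc 1 m, f k = ∑ k ∈ range (m + 1), f k := by
        rw [range_eq_Ico, sum_eq_sum_Ico_succ_bot m.succ_pos]; rfl
    _ = f 0 + ∑ k ∈ range m, f k := by rw [sum_range_succ, h, add_comm]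

/-- `quadSum a m 0` is `Q(a, m)`; the shift `h` is what the digit-wise computation produces. -/
def quadSum (a : ℤ) (m : ℕ) (h : ℤ) : ℚ := ∑ k ∈ range m, (k : ℚ) * (((a * k + h) % m : ℤ) : ℚ)

-- At `k = 0` both sawtooth values vanish, while the affine expressions give `(-1/2)²`.
lemma saw_mul_saw_eq {a : ℤ} {m : ℕ} (ha : IsCoprime a m) {k : ℕ} (hk : k < m) :
    saw (k / m) * saw (a * k / m)
      = ((k : ℚ) / m - 1 / 2) * (((a * k % m : ℤ) : ℚ) / m - 1 / 2)
        - if k = 0 then 1 / 4 else 0 := by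
  rcases eq_or_ne k 0 with rfl | hk0
  · norm_num [saw]
  have hk_ndvd : ¬(m : ℤ) ∣ k := fun h =>
    hk0 (Nat.eq_zero_of_dvd_of_lt (by exact_mod_cast h) hk)
  have hak_ndvd : ¬(m : ℤ) ∣ a * k := fun h => hk_ndvd (ha.symm.dvd_of_dvd_mul_left h)
  have hm : m ≠ 0 := by omega
  have e1 := saw_intCast_div_of_not_dvd hm hk_ndvd
  have e2 := saw_intCast_div_of_not_dvd hm hak_ndvd
  rw [Int.emod_eq_of_lt (by positivity) (by exact_mod_cast hk)] at e1
  push_cast at e1 e2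
  rw [e1, e2, if_neg hk0, sub_zero]

lemma dedS_eq_quadSum {a : ℤ} {m : ℕ} [NeZero m] (ha : IsCoprime a m) :
    dedS a m = quadSum a m 0 / m ^ 2 - (m - 1) / 4 := by
  have hm : (m : ℚ) ≠ 0 := NeZero.ne _
  have hperiodic : saw ((m : ℕ) / m) * saw (a * (m : ℕ) / m)
      = saw ((0 : ℕ) / m) * saw (a * (0 : ℕ) / m) := by
    simp [saw, hm]
  rw [dedS, sum_Icc_one_eq_sum_range (fun k : ℕ => saw (k / m) * saw (a * k / m)) hperiodic,
    sum_congr rfl fun k hk => saw_mul_saw_eq ha (mem_range.1 hk)]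
  have hexpand : ∀ k : ℕ, ((k : ℚ) / m - 1 / 2) * (((a * k % m : ℤ) : ℚ) / m - 1 / 2)
      = (k : ℚ) * ((a * k + 0) % m : ℤ) / m ^ 2 - k / (2 * m) - ((a * k + 0) % m : ℤ) / (2 * m)
        + 1 / 4 := by
    intro k; rw [add_zero]; field_simp; ring
  simp only [hexpand, sum_sub_distrib, sum_add_distrib, ← sum_div, sum_const, card_range,
    nsmul_eq_mul, sum_ite_eq', mem_range, NeZero.pos, if_true, sum_range_natCast,
    sum_range_cast_affine_emod ha]
  rw [quadSum]
  field_simp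
  ring

lemma quadSum_of_dvd_sq_add_one {α : ℤ} {m : ℕ} [NeZero m] (hα : (m : ℤ) ∣ α ^ 2 + 1) :
    quadSum α m 0 = m ^ 2 * (m - 1) / 4 := by
  have hcop : IsCoprime α m := by
    obtain ⟨t, ht⟩ := hα
    exact ⟨-α, t, by linear_combination -ht⟩
  -- Since `α² ≡ -1`, applying `k ↦ α k mod m` twice gives `k ↦ m - k`,
  -- so reindexing by `k ↦ α k mod m` turns `Q` into `∑ (α k mod m) (m - k)`.
  have hneg : ∀ k ∈ range m,
      (((α * k + 0) % m : ℤ) : ℚ) * (((α * ((α * k + 0) % m) + 0) % m : ℤ) : ℚ)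
        = (((α * k + 0) % m : ℤ) : ℚ) * (m - k) := by
    intro k hk
    rcases eq_or_ne k 0 with rfl | hk0
    · simp
    have hmod : α * ((α * k + 0) % m) + 0 ≡ m - k [ZMOD m] :=
      calc α * ((α * k + 0) % m) + 0 ≡ α * (α * k + 0) [ZMOD m] := by
            rw [add_zero]; exact (Int.mod_modEq _ _).mul_left _
        _ = (α ^ 2 + 1) * k + (-k) := by ring
        _ ≡ 0 * k + (m - k) [ZMOD m] :=
            ((Int.modEq_zero_iff_dvd.2 hα).mul_right _).add (Int.modEq_iff_dvd.2 ⟨1, by ring⟩)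
        _ = m - k := by ring
    have hk := mem_range.1 hk
    rw [(hmod : _ = _), Int.emod_eq_of_lt (a := m - k) (by omega) (by omega)]
    push_cast; ring
  have hsymm : quadSum α m 0 = m * (m * (m - 1) / 2) - quadSum α m 0 := by
    set g : ℤ → ℚ := fun z => z * ((α * z + 0) % m : ℤ)
    have hQ : quadSum α m 0 = ∑ k ∈ range m, g k := by simp [g, quadSum]
    conv_lhs => rw [hQ, ← sum_range_affine_emod hcop 0 g]
    rw [sum_congr rfl hneg, ← sum_range_cast_affine_emod hcop 0, mul_sum, quadSum,
      ← sum_sub_distrib]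
    refine sum_congr rfl fun k _ => ?_
    ring
  linarith

lemma quadSum_emod (a : ℤ) (m : ℕ) (h : ℤ) : quadSum a m (h % m) = quadSum a m h := by
  simp [quadSum, Int.add_emod]

lemma sum_range_quadSum (a : ℤ) (m : ℕ) [NeZero m] :
    ∑ h ∈ range m, quadSum a m h = (m * (m - 1) / 2) ^ 2 := by
  simp only [quadSum]
  rw [sum_comm, sq]
  conv_rhs => rw [← sum_range_natCast m, sum_mul]
  refine sum_congr rfl fun k _ => ?_
  rw [← mul_sum]
  congr 1
  rw [sum_range_natCast, ← sum_range_cast_affine_emod isCoprime_one_left (a * k)]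
  refine sum_congr rfl fun h _ => ?_
  rw [one_mul, add_comm]

lemma sum_range_mul_eq_sum_sum {M : Type*} [AddCommMonoid M] (F : ℕ → M) (c b : ℕ) :
    ∑ k ∈ range (c * b), F k = ∑ v ∈ range c, ∑ w ∈ range b, F (v + c * w) := by
  induction b with
  | zero => simp
  | succ b ih =>
    rw [mul_add_one, sum_range_add, ih, ← sum_add_distrib]
    refine sum_congr rfl fun v _ => ?_
    rw [sum_range_succ, add_comm (c * b)]

lemma mul_add_emod_mul_eq {a B C : ℤ} (hB : 0 < B) (hC : C = B ^ 2 + 1) (v w : ℤ) :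
    ((a * C + B) * (v + C * w)) % (B * C)
      = B * v % C + C * ((a * w + (a * v + B * v / C)) % B) := by
  set Y := a * w + (a * v + B * v / C)
  have hC0 : 0 < C := by rw [hC]; positivity
  have hx := Int.emod_nonneg (B * v) hC0.ne'
  have hx' := Int.emod_lt_of_pos (B * v) hC0
  have hy := Int.emod_nonneg Y hB.ne'
  have hy' := Int.emod_lt_of_pos Y hB
  have hexp : (a * C + B) * (v + C * w)
      = B * v % C + C * (Y % B) + B * C * (a * w * B + w + Y / B) := by
    rw [Int.emod_def (B * v), Int.emod_def Y]
    simp only [Y]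
    linear_combination (a * w * C) * hC
  rw [hexp, Int.add_mul_emod_self_left, Int.emod_eq_of_lt (by positivity) (by nlinarith)]

lemma ediv_sq_add_one_eq {B C i j : ℤ} (hB : 0 < B) (hC : C = B ^ 2 + 1)
    (hi : 0 ≤ i) (hi' : i < B) (hj : 0 ≤ j) (hj' : j < B) : B * (i + B * j + 1) / C = j := by
  have h : B * (i + B * j + 1) = (B + i * B - j) + C * j := by rw [hC]; ring
  rw [h, Int.add_mul_ediv_left _ j (by rw [hC]; positivity),
    Int.ediv_eq_zero_of_lt (by nlinarith) (by rw [hC]; nlinarith), zero_add]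

lemma sum_range_quadSum_ediv (a : ℤ) {b c : ℕ} [NeZero b] (hc : c = b ^ 2 + 1) :
    ∑ v ∈ range c, quadSum a b (a * v + b * v / c)
      = quadSum a b 0 + b * (b * (b - 1) / 2) ^ 2 := by
  have hcop : IsCoprime (a * b + 1) (b : ℤ) := ⟨1, -a, by ring⟩
  -- Apart from `v = 0`, `v = i + b j + 1` with `i, j < b`, and then `⌊b v / c⌋ = j`.
  have hshift : ∀ i ∈ range b, ∀ j ∈ range b,
      quadSum a b (a * (i + b * j + 1 : ℕ) + b * (i + b * j + 1 : ℕ) / c)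
        = quadSum a b (((a * b + 1) * j + a * (i + 1)) % b) := by
    intro i hi j hj
    have hq : (b : ℤ) * (i + b * j + 1 : ℕ) / c = j := by
      push_cast
      exact ediv_sq_add_one_eq (by have := NeZero.pos b; omega) (by rw [hc]; push_cast; ring)
        (by positivity) (by simpa using hi) (by positivity) (by simpa using hj)
    rw [hq, quadSum_emod]
    congr 1
    push_cast
    ring
  rw [show range c = range (b * b + 1) by rw [hc, sq], sum_range_succ', sum_range_mul_eq_sum_sum,
    add_comm]
  simp only [Nat.cast_zero, mul_zero, zero_add, Int.zero_ediv]
  congr 1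
  rw [sum_congr rfl fun i hi => sum_congr rfl (hshift i hi)]
  simp only [sum_range_affine_emod hcop, sum_range_quadSum, sum_const, card_range, nsmul_eq_mul]

lemma quadSum_mul_add {a : ℤ} {b c : ℕ} [NeZero b] (hab : IsCoprime a b) (hc : c = b ^ 2 + 1) :
    quadSum (a * c + b) (b * c) 0
      = b * (c ^ 2 * (c - 1) / 4) + 2 * c * (b * (b - 1) / 2) * (c * (c - 1) / 2)
        + c ^ 2 * (quadSum a b 0 + b * (b * (b - 1) / 2) ^ 2) := by
  have hB : (0 : ℤ) < b := by exact_mod_cast NeZero.pos b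
  have hC : (c : ℤ) = (b : ℤ) ^ 2 + 1 := by rw [hc]; push_cast; ring
  have : NeZero c := ⟨by rw [hc]; positivity⟩
  have hbc : IsCoprime (b : ℤ) c := ⟨-b, 1, by rw [hC]; ring⟩
  have hterm : ∀ v w : ℕ,
      ((v + c * w : ℕ) : ℚ) * ((((a * c + b) * (v + c * w : ℕ) + 0) % (c * b : ℕ) : ℤ) : ℚ)
        = (v + c * w)
          * ((((b * v + 0) % c : ℤ) : ℚ) + c * ((a * w + (a * v + b * v / c)) % b : ℤ)) := by
    intro v w
    have hdigits : ((a * c + b) * (v + c * w : ℕ) + 0) % (c * b : ℕ)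
        = (b * v + 0) % (c : ℤ) + c * ((a * w + (a * v + b * v / c)) % b) := by
      rw [add_zero, add_zero, Nat.cast_mul, mul_comm (c : ℤ), Nat.cast_add, Nat.cast_mul]
      exact mul_add_emod_mul_eq hB hC v w
    rw [hdigits]
    push_cast
    ring
  have hinner : ∀ v : ℕ,
      ∑ w ∈ range b, ((v : ℚ) + c * w)
          * ((((b * v + 0) % c : ℤ) : ℚ) + c * ((a * w + (a * v + b * v / c)) % b : ℤ))
        = b * (v * ((b * v + 0) % c : ℤ)) + c * (b * (b - 1) / 2) * v
          + c * (b * (b - 1) / 2) * ((b * v + 0) % c : ℤ)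
          + c ^ 2 * quadSum a b (a * v + b * v / c) := by
    intro v
    set x : ℚ := (((b * v + 0) % c : ℤ) : ℚ)
    have hexpand : ∀ w : ℕ, ((v : ℚ) + c * w) * (x + c * ((a * w + (a * v + b * v / c)) % b : ℤ))
        = v * x + c * v * ((a * w + (a * v + b * v / c)) % b : ℤ) + c * x * w
          + c ^ 2 * (w * ((a * w + (a * v + b * v / c)) % b : ℤ)) := fun w => by ring
    have hy := sum_range_cast_affine_emod hab (a * v + b * v / c)
    simp only [hexpand, sum_add_distrib, ← mul_sum, sum_const, card_range, nsmul_eq_mul, hy,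
      sum_range_natCast]
    rw [quadSum]
    ring
  rw [quadSum, mul_comm b c, sum_range_mul_eq_sum_sum]
  simp only [hterm, hinner, sum_add_distrib, ← mul_sum]
  rw [sum_range_natCast, sum_range_cast_affine_emod hbc 0, sum_range_quadSum_ediv a hc,
    show ∑ v ∈ range c, (v : ℚ) * ((b * v + 0) % c : ℤ) = quadSum b c 0 from rfl,
    quadSum_of_dvd_sq_add_one ⟨1, by rw [hC]; ring⟩]
  ring

lemma isCoprime_mul_add {a : ℤ} {b c : ℕ} (hab : IsCoprime a b) (hc : c = b ^ 2 + 1) :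
    IsCoprime (a * c + b) (b * c : ℕ) := by
  have hC : (c : ℤ) = (b : ℤ) ^ 2 + 1 := by rw [hc]; push_cast; ring
  have hb : IsCoprime (a * c + b) b := by
    rw [show a * c + b = a + (a * b + 1) * b by rw [hC]; ring]
    exact hab.add_mul_right_left _
  have hc' : IsCoprime (a * c + b) c := by
    rw [add_comm, mul_comm]
    exact (show IsCoprime (b : ℤ) c from ⟨-b, 1, by rw [hC]; ring⟩).add_mul_left_left a
  push_cast
  exact hb.mul_right hc'

lemma dedS_mul_add {a : ℤ} {b c : ℕ} [NeZero b] (hab : IsCoprime a b) (hc : c = b ^ 2 + 1) :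
    dedS (a * c + b) (b * c) = dedS a b := by
  have : NeZero (b * c) := ⟨mul_ne_zero (NeZero.ne b) (by rw [hc]; positivity)⟩
  have hcQ : (c : ℚ) = b ^ 2 + 1 := by rw [hc]; push_cast; ring
  have hb : (b : ℚ) ≠ 0 := NeZero.ne _
  rw [dedS_eq_quadSum (isCoprime_mul_add hab hc), dedS_eq_quadSum hab, quadSum_mul_add hab hc,
    Nat.cast_mul, hcQ]
  field_simp
  ring

lemma infinite_setOf_S_eq {a : ℤ} {b : ℕ} (hb : 0 < b) (hab : Int.gcd a b = 1) :
    {b' : ℕ | ∃ a' : ℤ, Int.gcd a' b' = 1 ∧ S a' b' = S a b}.Infinite := by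
  set s := {b' : ℕ | ∃ a' : ℤ, Int.gcd a' b' = 1 ∧ S a' b' = S a b}
  have hstep : ∀ b' ∈ s, 0 < b' → b' * (b' ^ 2 + 1) ∈ s := by
    rintro b' ⟨a', ha', hS⟩ hb'
    have : NeZero b' := ⟨hb'.ne'⟩
    rw [← Int.isCoprime_iff_gcd_eq_one] at ha'
    refine ⟨a' * (b' ^ 2 + 1 : ℕ) + b',
      Int.isCoprime_iff_gcd_eq_one.1 (isCoprime_mul_add ha' rfl), ?_⟩
    rw [S, dedS_mul_add ha' rfl, ← S, hS]
  refine Set.infinite_of_forall_exists_gt fun n => ?_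
  induction n with
  | zero => exact ⟨b, ⟨a, hab, rfl⟩, hb⟩
  | succ n ih =>
    obtain ⟨b', hb's, hnb'⟩ := ih
    refine ⟨b' * (b' ^ 2 + 1), hstep b' hb's (by omega), ?_⟩
    nlinarith

theorem stmt_18_general (k : ℤ) (q : ℕ)
    (h : ∃ a : ℤ, ∃ b : ℕ, 0 < b ∧ Int.gcd a b = 1 ∧ S a b = (k : ℚ) / q) :
    {b' : ℕ | ∃ a' : ℤ, Int.gcd a' b' = 1 ∧ S a' b' = (k : ℚ) / q}.Infinite := by
  obtain ⟨a, b, hb, hab, hS⟩ := h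
  rw [← hS]
  exact infinite_setOf_S_eq hb hab

theorem stmt_18 (k : ℤ) (q : ℕ) (hq : 2 ≤ q) (hkq : Int.gcd k q = 1)
    (h : ∃ a : ℤ, ∃ b : ℕ, 0 < b ∧ Int.gcd a b = 1 ∧ S a b = (k : ℚ) / q) :
    {b' : ℕ | ∃ a' : ℤ, Int.gcd a' b' = 1 ∧ S a' b' = (k : ℚ) / q}.Infinite :=
  stmt_18_general k q h
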